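/- arXiv:1812.10008 — 9 statements merged into one kernel-verified Lean document; each statement's English description precedes it below -/
import Mathlib

section
/- For all variables x₁, x₂, x₃ and every term M in Λ↑, one has {x₁x₂}({x₂x₃} M) = {x₁x₃} M. -/
/-- Terms of Λ↑: variables, application, named abstraction, explicit weakening. -/
inductive Tm : Type
  | var : ℕ → Tm
  | app : Tm → Tm → Tm
  | lam : ℕ → Tm → Tm
  | up  : Tm → Tm

/-- Renaming functions: `swap y x` is `{yx}`, `lift F x` is `F_x`. -/
inductive Ren : Type
  | swap : ℕ → ℕ → Ren
  | lift : Ren → ℕ → Ren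

/-- Action of a renaming function on a term. -/
def Ren.apply : Ren → Tm → Tm
  | F, .app M N => .app (F.apply M) (F.apply N)
  | F, .lam x M => .lam x ((F.lift x).apply M)
  | .lift F _, .up M => .up (F.apply M)
  | .lift F x, .var z => if z = x then .var x else .up (F.apply (.var z))
  | .swap _ _, .up M => .up M
  | .swap y x, .var z => if z = x then .var y else .up (.var z)
termination_by F M => (sizeOf M, sizeOf F)

/-- Iterated lifting `F_Γ` for a context `Γ = y₁,…,yₙ` (the list `[y₁,…,yₙ]`):
lift by `y₁` first, then `y₂`, …, then `yₙ`. -/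
def Ren.liftCtx (F : Ren) (Γ : List ℕ) : Ren := Γ.foldl Ren.lift F

/-- Alpha-conversion: smallest compatible equivalence with `λx M =α λy {yx}M`. -/
inductive Alpha : Tm → Tm → Prop
  | refl (M) : Alpha M M
  | symm {M N} : Alpha M N → Alpha N M
  | trans {M N P} : Alpha M N → Alpha N P → Alpha M P
  | app {M₁ M₂ N₁ N₂} : Alpha M₁ M₂ → Alpha N₁ N₂ → Alpha (.app M₁ N₁) (.app M₂ N₂)
  | lam {M₁ M₂} (x) : Alpha M₁ M₂ → Alpha (.lam x M₁) (.lam x M₂)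
  | up {M₁ M₂} : Alpha M₁ M₂ → Alpha (.up M₁) (.up M₂)
  | rename (x y M) : Alpha (.lam x M) (.lam y ((Ren.swap y x).apply M))

/-- de Bruijn normalisation `db_z : Λ↑ → Λ↑`. -/
def db (z : ℕ) : Tm → Tm
  | .var x => .var x
  | .up M => .up (db z M)
  | .app M N => .app (db z M) (db z N)
  | .lam x M => .lam z ((Ren.swap z x).apply (db z M))
/-- Derivations of judgments `Γ ⊢ M`.  A context `Γ = y₁,…,yₙ` is the list
`[y₁,…,yₙ]` and `Γ,x` is `Γ ++ [x]`. -/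
inductive Der : List ℕ → Tm → Type
  | varNil (x : ℕ) : Der [] (.var x)
  | varHere (Γ : List ℕ) (x : ℕ) : Der (Γ ++ [x]) (.var x)
  | varThere {Γ : List ℕ} {x : ℕ} (z : ℕ) : z ≠ x → Der Γ (.var x) → Der (Γ ++ [z]) (.var x)
  | app {Γ M N} : Der Γ M → Der Γ N → Der Γ (.app M N)
  | upNil {M} : Der [] M → Der [] (.up M)
  | upCons {Γ M} (x : ℕ) : Der Γ M → Der (Γ ++ [x]) (.up M)
  | lam {Γ M} (x : ℕ) : Der (Γ ++ [x]) M → Der Γ (.lam x M)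

/-- Generalized de Bruijn terms. -/
inductive Db : Type
  | var : ℕ → Db
  | one : Db
  | app : Db → Db → Db
  | lam : Db → Db
  | up  : Db → Db

/-- Auxiliary translation, with the context given in *reversed* order
(head of the list is the last variable of the context). -/
def transAux : List ℕ → Tm → Db
  | Γ, .app M N => .app (transAux Γ M) (transAux Γ N)
  | Γ, .lam x M => .lam (transAux (x :: Γ) M)
  | [], .var x => .var x
  | y :: Γ, .var x => if y = x then .one else .up (transAux Γ (.var x))
  | [], .up M => .up (transAux [] M)
  | _ :: Γ, .up M => .up (transAux Γ M)
termination_by Γ M => (sizeOf M, Γ.length)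

/-- The translation `‖Γ ⊢ M‖`, with `Γ = y₁,…,yₙ` given as the list `[y₁,…,yₙ]`. -/
def transl (Γ : List ℕ) (M : Tm) : Db := transAux Γ.reverse M

/-- The map `db_z` from generalized de Bruijn terms back to `Λ↑`. -/
def dbD (z : ℕ) : Db → Tm
  | .var x => .var x
  | .one => .var z
  | .lam A => .lam z (dbD z A)
  | .app A B => .app (dbD z A) (dbD z B)
  | .up A => .up (dbD z A)

/-- The function `{z/Γ}`, with `Γ = y₁,…,yₙ` given as the list `[y₁,…,yₙ]`:
`{z/nil}M = M` and `{z/x,Δ}M = {z/Δ}({zx}_Δ M)`. -/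
def subAll (z : ℕ) : List ℕ → Tm → Tm
  | [], M => M
  | x :: Δ, M => subAll z Δ (((Ren.swap z x).liftCtx Δ).apply M)

lemma Ren.apply_app (F : Ren) (M N : Tm) :
    F.apply (.app M N) = .app (F.apply M) (F.apply N) := by
  cases F <;> simp [Ren.apply]

lemma Ren.apply_lam (F : Ren) (x : ℕ) (M : Tm) :
    F.apply (.lam x M) = .lam x ((F.lift x).apply M) := by
  cases F <;> simp [Ren.apply]

lemma Ren.swap_apply_up (y x : ℕ) (M : Tm) :
    (Ren.swap y x).apply (.up M) = .up M := by simp [Ren.apply]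

lemma Ren.lift_apply_up (F : Ren) (x : ℕ) (M : Tm) :
    (F.lift x).apply (.up M) = .up (F.apply M) := by simp [Ren.apply]

lemma Ren.swap_apply_var (y x z : ℕ) :
    (Ren.swap y x).apply (.var z) = if z = x then .var y else .up (.var z) := by
  simp [Ren.apply]

lemma Ren.lift_apply_var (F : Ren) (x z : ℕ) :
    (F.lift x).apply (.var z) = if z = x then .var x else .up (F.apply (.var z)) := by
  simp [Ren.apply]

lemma Ren.liftCtx_nil (F : Ren) : F.liftCtx [] = F := rfl

lemma Ren.liftCtx_append (F : Ren) (Γ : List ℕ) (x : ℕ) :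
    F.liftCtx (Γ ++ [x]) = (F.liftCtx Γ).lift x := by
  simp [Ren.liftCtx]

lemma stmt0_gen (x₁ x₂ x₃ : ℕ) (M : Tm) : ∀ Γ : List ℕ,
    ((Ren.swap x₁ x₂).liftCtx Γ).apply (((Ren.swap x₂ x₃).liftCtx Γ).apply M)
      = ((Ren.swap x₁ x₃).liftCtx Γ).apply M := by
  induction M with
  | app M N ihM ihN =>
      intro Γ
      simp [Ren.apply_app, ihM, ihN]
  | lam x M ih =>
      intro Γ
      have := ih (Γ ++ [x])
      simp only [Ren.liftCtx_append] at this
      simp [Ren.apply_lam, this]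
  | up M ih =>
      intro Γ
      induction Γ using List.reverseRecOn with
      | nil => simp [Ren.liftCtx_nil, Ren.swap_apply_up]
      | append_singleton Δ x _ =>
          simp [Ren.liftCtx_append, Ren.lift_apply_up, ih Δ]
  | var z =>
      intro Γ
      induction Γ using List.reverseRecOn with
      | nil =>
          simp only [Ren.liftCtx_nil, Ren.swap_apply_var]
          by_cases h : z = x₃ <;> simp [h, Ren.swap_apply_var, Ren.swap_apply_up]
      | append_singleton Δ x ih =>
          simp only [Ren.liftCtx_append, Ren.lift_apply_var]
          by_cases h : z = x <;> simp [h, Ren.lift_apply_var, Ren.lift_apply_up, ih]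

/-- `{x₁x₂}({x₂x₃} M) = {x₁x₃} M`. -/
theorem stmt0 (x₁ x₂ x₃ : ℕ) (M : Tm) :
    (Ren.swap x₁ x₂).apply ((Ren.swap x₂ x₃).apply M) = (Ren.swap x₁ x₃).apply M := by
  simpa [Ren.liftCtx_nil] using stmt0_gen x₁ x₂ x₃ M []
end

section
/- If M =α N then F(M) =α F(N), for every renaming function F and all terms M, N in Λ↑. -/
def Ren.liftR : Ren → List ℕ → Ren
  | F, [] => F
  | F, w :: Δ => (F.liftR Δ).lift w

theorem ren_comm (F : Ren) (x y : ℕ) : ∀ (Δ : List ℕ) (M : Tm),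
    ((F.lift y).liftR Δ).apply (((Ren.swap y x).liftR Δ).apply M)
      = ((Ren.swap y x).liftR Δ).apply (((F.lift x).liftR Δ).apply M)
  | Δ, .app M N => by
      simp [Ren.apply, ren_comm F x y Δ M, ren_comm F x y Δ N]
  | Δ, .lam w M => by
      simp only [Ren.apply]
      have h := ren_comm F x y (w :: Δ) M
      simp only [Ren.liftR] at h
      rw [h]
  | [], .up M => by
      simp [Ren.liftR, Ren.apply]
  | w :: Δ, .up M => by
      simp only [Ren.liftR, Ren.apply]
      rw [ren_comm F x y Δ M]
  | [], .var z => by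
      by_cases hx : z = x
      · subst hx
        simp [Ren.liftR, Ren.apply]
      · by_cases hy : z = y
        · subst hy
          simp [Ren.liftR, Ren.apply, hx]
        · simp [Ren.liftR, Ren.apply, hx, hy]
  | w :: Δ, .var z => by
      by_cases hw : z = w
      · subst hw
        simp [Ren.liftR, Ren.apply]
      · simp only [Ren.liftR, Ren.apply, if_neg hw]
        rw [ren_comm F x y Δ (.var z)]
  termination_by Δ M => (sizeOf M, Δ.length)

/-- if `M =α N` then `F(M) =α F(N)`. -/
theorem stmt4 (F : Ren) (M N : Tm) (h : Alpha M N) : Alpha (F.apply M) (F.apply N) := by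
  induction h generalizing F with
  | refl M => exact .refl _
  | symm _ ih => exact .symm (ih F)
  | trans _ _ ih1 ih2 => exact .trans (ih1 F) (ih2 F)
  | app _ _ ih1 ih2 => simpa [Ren.apply] using Alpha.app (ih1 F) (ih2 F)
  | lam x _ ih => simpa [Ren.apply] using Alpha.lam x (ih (F.lift x))
  | up hMN ih =>
      cases F with
      | swap a b => simpa [Ren.apply] using Alpha.up hMN
      | lift G w => simpa [Ren.apply] using Alpha.up (ih G)
  | rename x y M =>
      have h := ren_comm F x y [] M
      simp only [Ren.liftR] at h
      simp only [Ren.apply]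
      rw [h]
      exact Alpha.rename x y _
end

section
/- For every variable z and all terms M, N in Λ↑: if M =α N then db_z(M) = db_z(N). -/
namespace Stmt8Aux

/-- Reversed iterated lifting: head of the list is the innermost (last applied) lift. -/
def liftR (F : Ren) : List ℕ → Ren
  | [] => F
  | a :: E => Ren.lift (liftR F E) a

lemma liftCtx_append (F : Ren) (Δ : List ℕ) (x : ℕ) :
    Ren.liftCtx F (Δ ++ [x]) = (Ren.liftCtx F Δ).lift x := by
  simp [Ren.liftCtx]

lemma liftCtx_nil (F : Ren) : Ren.liftCtx F [] = F := rfl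

lemma Dvar (z : ℕ) (F : Ren) (w v : ℕ) : ∀ E : List ℕ,
    (liftR (F.lift z) E).apply ((liftR (Ren.swap z w) E).apply (.var v)) =
    (liftR (Ren.swap z w) E).apply ((liftR (F.lift w) E).apply (.var v)) := by
  intro E
  induction E with
  | nil => by_cases h : v = w <;> simp [liftR, Ren.apply, h]
  | cons a E ih => by_cases h : v = a <;> simp [liftR, Ren.apply, h, ih]

lemma lemD (z : ℕ) (F : Ren) (w : ℕ) (P : Tm) : ∀ E : List ℕ,
    (liftR (F.lift z) E).apply ((liftR (Ren.swap z w) E).apply P) =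
    (liftR (Ren.swap z w) E).apply ((liftR (F.lift w) E).apply P) := by
  induction P with
  | var v => exact Dvar z F w v
  | app A B ihA ihB => intro E; simp [Ren.apply, ihA, ihB]
  | lam a Q ih =>
      intro E
      have h := ih (a :: E)
      simp only [liftR] at h
      simp [Ren.apply, h]
  | up M ih =>
      intro E
      cases E with
      | nil => simp [liftR, Ren.apply]
      | cons a E' => simp [liftR, Ren.apply, ih E']

lemma S_app (z : ℕ) : ∀ (Γ : List ℕ) (A B : Tm),
    subAll z Γ (.app A B) = .app (subAll z Γ A) (subAll z Γ B) := by
  intro Γ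
  induction Γ with
  | nil => intro A B; simp [subAll]
  | cons y Δ ih => intro A B; simp [subAll, Ren.apply, ih]

lemma S_up (z : ℕ) : ∀ (Δ : List ℕ) (x : ℕ) (N : Tm),
    subAll z (Δ ++ [x]) (.up N) = .up (subAll z Δ N) := by
  intro Δ
  induction Δ with
  | nil => intro x N; simp [subAll, liftCtx_nil, Ren.apply]
  | cons y Δ ih => intro x N; simp [subAll, liftCtx_append, Ren.apply, ih]

lemma S_var (z : ℕ) : ∀ (Δ : List ℕ) (x v : ℕ),
    subAll z (Δ ++ [x]) (.var v) =
      if v = x then .var z else .up (subAll z Δ (.var v)) := by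
  intro Δ
  induction Δ with
  | nil => intro x v; by_cases h : v = x <;> simp [subAll, liftCtx_nil, Ren.apply, h]
  | cons y Δ ih =>
      intro x v
      by_cases h : v = x
      · subst h
        simp [subAll, liftCtx_append, Ren.apply, ih]
      · simp [subAll, liftCtx_append, Ren.apply, h, S_up, ih]

lemma S_lam (z : ℕ) : ∀ (Γ : List ℕ) (w : ℕ) (P : Tm),
    subAll z Γ (.lam z ((Ren.swap z w).apply P)) = .lam z (subAll z (Γ ++ [w]) P) := by
  intro Γ
  induction Γ with
  | nil => intro w P; simp [subAll, liftCtx_nil]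
  | cons y Δ ih =>
      intro w P
      have hD := lemD z (Ren.liftCtx (Ren.swap z y) Δ) w P []
      simp only [liftR] at hD
      simp only [subAll, Ren.apply, hD, ih, List.cons_append, List.append_eq, liftCtx_append]

lemma Bvar (z : ℕ) : ∀ (E : List ℕ) (v : ℕ),
    dbD z (transAux E (.var v)) = subAll z E.reverse (.var v) := by
  intro E
  induction E with
  | nil => intro v; simp [transAux, dbD, subAll]
  | cons x E ih =>
      intro v
      by_cases h : x = v
      · subst h; simp [transAux, dbD, S_var]
      · simp [transAux, dbD, h, ih, S_var, Ne.symm h]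

lemma lemB (z : ℕ) : ∀ (M : Tm) (E : List ℕ),
    dbD z (transAux E M) = subAll z E.reverse (db z M) := by
  intro M
  induction M with
  | var v => intro E; exact Bvar z E v
  | app A B ihA ihB => intro E; simp [transAux, dbD, db, S_app, ihA, ihB]
  | lam w M ih =>
      intro E
      have h := ih (w :: E)
      simp only [List.reverse_cons] at h
      simp [transAux, dbD, db, h, S_lam]
  | up M ih =>
      intro E
      cases E with
      | nil => simp [transAux, dbD, db, subAll, ih]
      | cons x E' => simp [transAux, dbD, db, S_up, ih E']

lemma Avar (y x : ℕ) : ∀ (E : List ℕ) (v : ℕ) (Γ : List ℕ),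
    transAux (E ++ x :: Γ) (.var v) =
    transAux (E ++ y :: Γ) ((liftR (Ren.swap y x) E).apply (.var v)) := by
  intro E
  induction E with
  | nil =>
      intro v Γ
      by_cases h : v = x
      · subst h; simp [transAux, liftR, Ren.apply]
      · simp [transAux, liftR, Ren.apply, h, Ne.symm h]
  | cons a E ih =>
      intro v Γ
      by_cases h : v = a
      · subst h; simp [transAux, liftR, Ren.apply]
      · simp [transAux, liftR, Ren.apply, h, Ne.symm h, ih]

lemma lemA' (y x : ℕ) : ∀ (M : Tm) (E Γ : List ℕ),
    transAux (E ++ x :: Γ) M =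
    transAux (E ++ y :: Γ) ((liftR (Ren.swap y x) E).apply M) := by
  intro M
  induction M with
  | var v => intro E Γ; exact Avar y x E v Γ
  | app A B ihA ihB => intro E Γ; simp [transAux, Ren.apply, ihA, ihB]
  | lam w M ih =>
      intro E Γ
      have h := ih (w :: E) Γ
      simp only [liftR, List.cons_append] at h
      simp [transAux, Ren.apply, h]
  | up M ih =>
      intro E Γ
      cases E with
      | nil => simp [transAux, liftR, Ren.apply]
      | cons a E' => simp [transAux, liftR, Ren.apply, ih E']

lemma lemA {M N : Tm} (h : Alpha M N) : ∀ Γ : List ℕ, transAux Γ M = transAux Γ N := by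
  induction h with
  | refl M => intro Γ; rfl
  | symm _ ih => intro Γ; exact (ih Γ).symm
  | trans _ _ ih₁ ih₂ => intro Γ; exact (ih₁ Γ).trans (ih₂ Γ)
  | app _ _ ih₁ ih₂ => intro Γ; simp [transAux, ih₁ Γ, ih₂ Γ]
  | lam x _ ih => intro Γ; simp [transAux, ih (x :: Γ)]
  | up _ ih =>
      intro Γ
      cases Γ with
      | nil => simp [transAux, ih []]
      | cons a Γ' => simp [transAux, ih Γ']
  | rename x y M =>
      intro Γ
      have h := lemA' y x M [] Γ
      simp only [liftR, List.nil_append] at h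
      simp [transAux, h]

lemma db_eq (z : ℕ) (M : Tm) : db z M = dbD z (transAux [] M) := by
  have := lemB z M []
  simpa [subAll] using this.symm

end Stmt8Aux

/-- if `M =α N` then `db_z(M) = db_z(N)`. -/
theorem stmt8 (z : ℕ) (M N : Tm) (h : Alpha M N) : db z M = db z N := by
  rw [Stmt8Aux.db_eq, Stmt8Aux.db_eq, Stmt8Aux.lemA h []]
end

section
/- For all variables x, y, z and all terms M, N in Λ↑: λx M =α λy N if and only if {zx} M =α {zy} N. -/
namespace Stmt10Aux

@[simp] lemma apply_app (F : Ren) (M N : Tm) : F.apply (.app M N) = .app (F.apply M) (F.apply N) := by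
  cases F <;> simp [Ren.apply]
@[simp] lemma apply_lam (F : Ren) (x : ℕ) (M : Tm) : F.apply (.lam x M) = .lam x ((F.lift x).apply M) := by
  cases F <;> simp [Ren.apply]
@[simp] lemma lift_up (F : Ren) (x : ℕ) (M : Tm) : (F.lift x).apply (.up M) = .up (F.apply M) := by
  simp [Ren.apply]
@[simp] lemma swap_up (y x : ℕ) (M : Tm) : (Ren.swap y x).apply (.up M) = .up M := by
  simp [Ren.apply]
lemma lift_var (F : Ren) (x z : ℕ) : (F.lift x).apply (.var z) = if z = x then .var x else .up (F.apply (.var z)) := by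
  simp [Ren.apply]
lemma swap_var (y x z : ℕ) : (Ren.swap y x).apply (.var z) = if z = x then .var y else .up (.var z) := by
  simp [Ren.apply]
@[simp] lemma liftCtx_nil (F : Ren) : F.liftCtx [] = F := rfl
@[simp] lemma liftCtx_concat (F : Ren) (Δ : List ℕ) (w : ℕ) :
    F.liftCtx (Δ ++ [w]) = (F.liftCtx Δ).lift w := by
  simp [Ren.liftCtx]

/-- Key commutation: `{yx}∘F_x = F_y∘{yx}` (lifted by any context `Δ`). -/
lemma comm (F : Ren) (x y : ℕ) :
    ∀ (M : Tm) (Δ : List ℕ),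
      ((Ren.swap y x).liftCtx Δ).apply (((F.lift x).liftCtx Δ).apply M)
        = ((F.lift y).liftCtx Δ).apply (((Ren.swap y x).liftCtx Δ).apply M) := by
  intro M
  induction M with
  | app A B ihA ihB => intro Δ; simp [ihA Δ, ihB Δ]
  | lam w A ih =>
      intro Δ
      simpa [← liftCtx_concat] using congrArg (Tm.lam w) (ih (Δ ++ [w]))
  | up A ih =>
      intro Δ
      induction Δ using List.reverseRecOn with
      | nil => simp
      | append_singleton Δ' w _ => simp [ih Δ']
  | var v =>
      intro Δ
      induction Δ using List.reverseRecOn with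
      | nil =>
          by_cases h : v = x
          · subst h; simp [lift_var, swap_var]
          · simp [lift_var, swap_var, h]
      | append_singleton Δ' w ih =>
          by_cases h : v = w
          · subst h; simp [lift_var]
          · simp [lift_var, h, ih]

/-- Alpha is preserved by every renaming. -/
lemma alpha_apply {M N : Tm} (h : Alpha M N) (F : Ren) : Alpha (F.apply M) (F.apply N) := by
  induction h generalizing F with
  | refl M => exact .refl _
  | symm _ ih => exact .symm (ih F)
  | trans _ _ ih₁ ih₂ => exact .trans (ih₁ F) (ih₂ F)
  | app _ _ ih₁ ih₂ => simpa using .app (ih₁ F) (ih₂ F)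
  | lam x _ ih => simpa using .lam x (ih (F.lift x))
  | up h ih =>
      cases F with
      | swap y x => simpa using Alpha.up h
      | lift F x => simpa using Alpha.up (ih F)
  | rename x y M =>
      have := comm F x y M []
      simp only [liftCtx_nil] at this
      simp only [apply_lam]
      rw [← this]
      exact .rename x y _

/-- `db z` is the identity on terms of the form `G (var v)`. -/
lemma db_apply_var (z : ℕ) : ∀ (G : Ren) (v : ℕ), db z (G.apply (.var v)) = G.apply (.var v) := by
  intro G
  induction G with
  | swap y x =>
      intro v
      by_cases h : v = x <;> simp [swap_var, h, db]
  | lift F x ih =>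
      intro v
      by_cases h : v = x <;> simp [lift_var, h, db, ih]

/-- `db z` commutes with renamings. -/
lemma db_apply (z : ℕ) (M : Tm) : ∀ (G : Ren), db z (G.apply M) = G.apply (db z M) := by
  induction M with
  | var v => intro G; simpa [db] using db_apply_var z G v
  | app A B ihA ihB => intro G; simp [db, ihA, ihB]
  | up A ih =>
      intro G
      cases G with
      | swap y x => simp [db]
      | lift F x => simp [db, ih]
  | lam w A ih =>
      intro G
      have hc := comm G w z (db z A) []
      simp only [liftCtx_nil] at hc
      simp [db, ih, hc]

/-- `{zx} = {zy}∘{yx}` on any term (lifted by any context). -/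
lemma swap_swap (z x y : ℕ) :
    ∀ (M : Tm) (Δ : List ℕ),
      ((Ren.swap z x).liftCtx Δ).apply M
        = ((Ren.swap z y).liftCtx Δ).apply (((Ren.swap y x).liftCtx Δ).apply M) := by
  intro M
  induction M with
  | app A B ihA ihB => intro Δ; simp [ihA Δ, ihB Δ]
  | lam w A ih =>
      intro Δ
      simpa [← liftCtx_concat] using congrArg (Tm.lam w) (ih (Δ ++ [w]))
  | up A ih =>
      intro Δ
      induction Δ using List.reverseRecOn with
      | nil => simp
      | append_singleton Δ' w _ => simp [ih Δ']
  | var v =>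
      intro Δ
      induction Δ using List.reverseRecOn with
      | nil =>
          by_cases h : v = x
          · subst h; simp [swap_var]
          · by_cases h' : v = y
            · subst h'; simp [swap_var, h]
            · simp [swap_var, h, h']
      | append_singleton Δ' w ih =>
          by_cases h : v = w
          · subst h; simp [lift_var]
          · simp [lift_var, h, ih]

/-- Alpha-equivalent terms have the same db-normal form. -/
lemma db_eq_of_alpha (z : ℕ) {M N : Tm} (h : Alpha M N) : db z M = db z N := by
  induction h with
  | refl M => rfl
  | symm _ ih => exact ih.symm
  | trans _ _ ih₁ ih₂ => exact ih₁.trans ih₂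
  | app _ _ ih₁ ih₂ => simp [db, ih₁, ih₂]
  | lam x _ ih => simp [db, ih]
  | up _ ih => simp [db, ih]
  | rename x y M =>
      have hs := swap_swap z x y (db z M) []
      simp only [liftCtx_nil] at hs
      simp [db, db_apply, hs]

/-- Every term is alpha-equivalent to its db-normal form. -/
lemma alpha_db (z : ℕ) (M : Tm) : Alpha M (db z M) := by
  induction M with
  | var v => exact .refl _
  | app A B ihA ihB => exact .app ihA ihB
  | up A ih => exact .up ih
  | lam x A ih =>
      refine .trans (.rename x z A) (.lam z ?_)
      exact alpha_apply ih (.swap z x)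

end Stmt10Aux

open Stmt10Aux in
/-- `λx M =α λy N` iff `{zx} M =α {zy} N`. -/
theorem stmt10 (x y z : ℕ) (M N : Tm) :
    Alpha (Tm.lam x M) (Tm.lam y N)
      ↔ Alpha ((Ren.swap z x).apply M) ((Ren.swap z y).apply N) := by
  constructor
  · intro h
    have hdb := db_eq_of_alpha z h
    simp only [db] at hdb
    injection hdb with _ hdb
    refine .trans (alpha_apply (alpha_db z M) (.swap z x)) ?_
    rw [hdb]
    exact .symm (alpha_apply (alpha_db z N) (.swap z y))
  · intro h
    exact .trans (.rename x z M) (.trans (.lam z h) (.symm (.rename y z N)))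
end

section
/- For every context Γ and every term M in Λ↑, there is exactly one derivation of the judgment Γ ⊢ M in the inference system; that is, the type of derivation trees of Γ ⊢ M is inhabited and any two derivations of Γ ⊢ M are equal. -/
def canonVar (Γ : List ℕ) (x : ℕ) : Der Γ (.var x) :=
  List.reverseRecOn Γ (.varNil x)
    (fun Δ z d => if h : z = x then h ▸ Der.varHere Δ z else .varThere z h d)

def canon : (Γ : List ℕ) → (M : Tm) → Der Γ M
  | Γ, .var x => canonVar Γ x
  | Γ, .app M N => .app (canon Γ M) (canon Γ N)
  | Γ, .lam x M => .lam x (canon (Γ ++ [x]) M)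
  | Γ, .up M =>
    List.reverseRecOn Γ (.upNil (canon [] M)) (fun Δ z _ => .upCons z (canon Δ M))

theorem canon_eq : ∀ {Γ : List ℕ} {M : Tm} (d : Der Γ M), d = canon Γ M := by
  intro Γ M d
  induction d with
  | varNil x => simp [canon, canonVar]
  | varHere Γ x => simp [canon, canonVar]
  | varThere z h d ih => simp [canon, canonVar, h, ih]
  | app d e ihd ihe => simp [canon]; exact ⟨ihd, ihe⟩
  | upNil d ih => simp [canon]; exact ih
  | upCons x d ih => simp [canon]; exact ih
  | lam x d ih => simp [canon]; exact ih

theorem der_uniq {Γ : List ℕ} {M : Tm} (d₁ d₂ : Der Γ M) : d₁ = d₂ := by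
  rw [canon_eq d₁, canon_eq d₂]

/-- each judgment `Γ ⊢ M` has exactly one derivation. -/
theorem stmt11 (Γ : List ℕ) (M : Tm) :
    Nonempty (Der Γ M) ∧ ∀ d₁ d₂ : Der Γ M, d₁ = d₂ := by
  exact ⟨⟨canon Γ M⟩, der_uniq⟩
end

section
/- For every context Γ and all terms M, N in Λ↑: if M =α N then ‖Γ ⊢ M‖ = ‖Γ ⊢ N‖. -/
/-- Relation: renaming `F` maps translation in (reversed) context `Γ` to `Γ'`. -/
inductive RenOk : Ren → List ℕ → List ℕ → Prop
  | swap (y x : ℕ) (Δ : List ℕ) : RenOk (Ren.swap y x) (x :: Δ) (y :: Δ)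
  | lift {F Γ Γ'} (w : ℕ) : RenOk F Γ Γ' → RenOk (F.lift w) (w :: Γ) (w :: Γ')

theorem renOk_var (z : ℕ) {F Γ Γ'} (h : RenOk F Γ Γ') :
    transAux Γ' (F.apply (.var z)) = transAux Γ (.var z) := by
  induction h with
  | swap y x Δ =>
    simp only [Ren.apply]
    by_cases hz : z = x
    · subst hz; simp [transAux]
    · simp [transAux, hz, Ne.symm hz]
  | lift w h ih =>
    simp only [Ren.apply]
    by_cases hz : z = w
    · subst hz; simp [transAux]
    · simp [transAux, hz, Ne.symm hz, ih]

theorem renOk_trans (M : Tm) : ∀ F Γ Γ', RenOk F Γ Γ' →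
    transAux Γ' (F.apply M) = transAux Γ M := by
  induction M with
  | var z => intro F Γ Γ' h; exact renOk_var z h
  | app M N ihM ihN =>
    intro F Γ Γ' h
    simp only [Ren.apply, transAux, ihM _ _ _ h, ihN _ _ _ h]
  | lam x M ih =>
    intro F Γ Γ' h
    simp only [Ren.apply, transAux, ih _ _ _ (RenOk.lift x h)]
  | up M ih =>
    intro F Γ Γ' h
    cases h with
    | swap y x Δ => simp [Ren.apply, transAux]
    | lift w h => simp [Ren.apply, transAux, ih _ _ _ h]

theorem stmt12aux {M N : Tm} (h : Alpha M N) : ∀ Δ, transAux Δ M = transAux Δ N := by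
  induction h with
  | refl M => intro Δ; rfl
  | symm _ ih => intro Δ; exact (ih Δ).symm
  | trans _ _ ih₁ ih₂ => intro Δ; exact (ih₁ Δ).trans (ih₂ Δ)
  | app _ _ ih₁ ih₂ => intro Δ; simp only [transAux, ih₁ Δ, ih₂ Δ]
  | lam x _ ih => intro Δ; simp only [transAux, ih (x :: Δ)]
  | up _ ih => intro Δ; cases Δ <;> simp only [transAux, ih]
  | rename x y M =>
    intro Δ
    simp only [transAux]
    exact congrArg Db.lam (renOk_trans M _ _ _ (RenOk.swap y x Δ)).symm

/-- if `M =α N` then `‖Γ ⊢ M‖ = ‖Γ ⊢ N‖`. -/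
theorem stmt12 (Γ : List ℕ) (M N : Tm) (h : Alpha M N) : transl Γ M = transl Γ N :=
  stmt12aux h Γ.reverse
end

section
/- For all variables x, y, all contexts Γ, Δ, and every term M in Λ↑, one has ‖Γ,x,Δ ⊢ M‖ = ‖Γ,y,Δ ⊢ {yx}_Δ M‖. -/
/-- Invariant relating a renaming to a pair of (reversed) contexts. -/
inductive RenInv : Ren → List ℕ → List ℕ → Prop
  | swap (y x : ℕ) (Γ : List ℕ) : RenInv (Ren.swap y x) (x :: Γ) (y :: Γ)
  | lift {F Γ₁ Γ₂} (w : ℕ) : RenInv F Γ₁ Γ₂ → RenInv (F.lift w) (w :: Γ₁) (w :: Γ₂)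

lemma main (M : Tm) : ∀ F Γ₁ Γ₂, RenInv F Γ₁ Γ₂ →
    transAux Γ₁ M = transAux Γ₂ (F.apply M) := by
  induction M with
  | var z =>
    intro F Γ₁ Γ₂ h
    induction h with
    | swap y x Γ =>
      by_cases hz : z = x
      · subst hz; simp [Ren.apply, transAux]
      · simp [Ren.apply, hz, transAux, Ne.symm hz]
    | lift w h ih =>
      by_cases hz : z = w
      · subst hz; simp [Ren.apply, transAux]
      · simp [Ren.apply, hz, transAux, Ne.symm hz, ih]
  | app M N ihM ihN =>
    intro F Γ₁ Γ₂ h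
    simp [Ren.apply, transAux, ihM F Γ₁ Γ₂ h, ihN F Γ₁ Γ₂ h]
  | lam w M ih =>
    intro F Γ₁ Γ₂ h
    simp [Ren.apply, transAux, ih (F.lift w) (w :: Γ₁) (w :: Γ₂) (RenInv.lift w h)]
  | up M ih =>
    intro F Γ₁ Γ₂ h
    cases h with
    | swap y x Γ => simp [Ren.apply, transAux]
    | lift w h => simp [Ren.apply, transAux, ih _ _ _ h]

lemma inv_liftCtx (Δ : List ℕ) : ∀ F Γ₁ Γ₂, RenInv F Γ₁ Γ₂ →
    RenInv (F.liftCtx Δ) (Δ.reverse ++ Γ₁) (Δ.reverse ++ Γ₂) := by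
  induction Δ with
  | nil => intro F Γ₁ Γ₂ h; simpa [Ren.liftCtx] using h
  | cons w Δ ih =>
    intro F Γ₁ Γ₂ h
    have := ih (F.lift w) (w :: Γ₁) (w :: Γ₂) (RenInv.lift w h)
    simpa [Ren.liftCtx] using this

/-- `‖Γ,x,Δ ⊢ M‖ = ‖Γ,y,Δ ⊢ {yx}_Δ M‖`. -/
theorem stmt13 (x y : ℕ) (Γ Δ : List ℕ) (M : Tm) :
    transl (Γ ++ [x] ++ Δ) M
      = transl (Γ ++ [y] ++ Δ) (((Ren.swap y x).liftCtx Δ).apply M) := by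
  have h := inv_liftCtx Δ (Ren.swap y x) (x :: Γ.reverse) (y :: Γ.reverse)
    (RenInv.swap y x Γ.reverse)
  have := main M _ _ _ h
  simpa [transl] using this
end

section
/- For all terms M, N in Λ↑: if ‖nil ⊢ M‖ = ‖nil ⊢ N‖ then M =α N. -/
/-- Auxiliary: lift a renaming `n` times, each time by the variable `z`. -/
def liftN (F : Ren) (z : ℕ) : ℕ → Ren
  | 0 => F
  | n + 1 => (liftN F z n).lift z

/-- Auxiliary: lift a renaming by a (reversed) list of variables. -/
def liftL (F : Ren) (Δ : List ℕ) : Ren := Δ.foldr (fun y G => G.lift y) F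

/-- Invariant of `db z`-images at depth `n`. -/
inductive Good (z : ℕ) : ℕ → Tm → Prop
  | var0 (x) : Good z 0 (.var x)
  | varz (n) : Good z (n + 1) (.var z)
  | app {n M N} : Good z n M → Good z n N → Good z n (.app M N)
  | lam {n M} : Good z (n + 1) M → Good z n (.lam z M)
  | up0 {M} : Good z 0 M → Good z 0 (.up M)
  | upS {n M} : Good z n M → Good z (n + 1) (.up M)

theorem good_lift (z x : ℕ) {n : ℕ} {Q : Tm}
    (h : Good z n Q) : Good z (n + 1) ((liftN (.swap z x) z n).apply Q) := by
  induction h with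
  | var0 w =>
    simp only [liftN, Ren.apply]
    by_cases hw : w = x
    · simp [hw]; exact Good.varz 0
    · simp [hw]; exact Good.upS (Good.var0 w)
  | varz n =>
    simp only [liftN, Ren.apply, if_pos rfl]
    exact Good.varz (n + 1)
  | app _ _ ih1 ih2 =>
    simp only [Ren.apply]
    exact Good.app ih1 ih2
  | lam _ ih =>
    simp only [Ren.apply]
    exact Good.lam ih
  | up0 h _ =>
    simp only [liftN, Ren.apply]
    exact Good.upS h
  | upS _ ih =>
    simp only [liftN, Ren.apply]
    exact Good.upS ih

theorem good_db (z : ℕ) (M : Tm) : Good z 0 (db z M) := by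
  induction M with
  | var x => exact Good.var0 x
  | app M N ihM ihN => exact Good.app ihM ihN
  | lam x M ih =>
    have := good_lift z x (n := 0) ih
    exact Good.lam this
  | up M ih => exact Good.up0 ih

theorem transAux_swap (z x : ℕ) :
    ∀ (Q : Tm) (Δ Γ : List ℕ),
      transAux (Δ ++ z :: Γ) ((liftL (.swap z x) Δ).apply Q)
        = transAux (Δ ++ x :: Γ) Q := by
  intro Q
  induction Q with
  | var w =>
    intro Δ Γ
    induction Δ with
    | nil =>
      simp only [liftL, List.foldr, List.nil_append, Ren.apply]
      by_cases hw : w = x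
      · subst hw; simp [transAux]
      · simp only [if_neg hw, transAux, if_neg (Ne.symm hw)]
    | cons y Δ' ihΔ =>
      simp only [liftL, List.foldr, List.cons_append, Ren.apply]
      by_cases hw : w = y
      · subst hw; simp [transAux]
      · simp only [if_neg hw, transAux, if_neg (Ne.symm hw)]
        exact congrArg Db.up ihΔ
  | app P Q ihP ihQ =>
    intro Δ Γ
    simp only [Ren.apply, transAux, ihP, ihQ]
  | lam y P ihP =>
    intro Δ Γ
    simp only [Ren.apply, transAux]
    have := ihP (y :: Δ) Γ
    simp only [liftL, List.foldr, List.cons_append] at this ⊢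
    rw [this]
  | up P ihP =>
    intro Δ Γ
    cases Δ with
    | nil =>
      simp only [liftL, List.foldr, List.nil_append, Ren.apply, transAux]
    | cons y Δ' =>
      simp only [liftL, List.foldr, List.cons_append, Ren.apply, transAux]
      have := ihP Δ' Γ
      simp only [liftL] at this
      rw [this]

theorem transAux_db (z : ℕ) : ∀ (M : Tm) (Γ : List ℕ), transAux Γ (db z M) = transAux Γ M := by
  intro M
  induction M with
  | var x => intro Γ; rfl
  | app M N ihM ihN => intro Γ; simp only [db, transAux, ihM, ihN]
  | lam x M ih =>
    intro Γ
    simp only [db, transAux]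
    have h := transAux_swap z x (db z M) [] Γ
    simp only [liftL, List.foldr, List.nil_append] at h
    rw [h, ih]
  | up M ih =>
    intro Γ
    cases Γ with
    | nil => simp only [db, transAux, ih]
    | cons y Γ' => simp only [db, transAux, ih]

theorem transAux_inj (z : ℕ) :
    ∀ {n : ℕ} {M N : Tm}, Good z n M → Good z n N →
      transAux (List.replicate n z) M = transAux (List.replicate n z) N → M = N := by
  intro n M N hM
  induction hM generalizing N with
  | var0 w =>
    intro hN h
    cases hN with
    | var0 w' => simpa [transAux, List.replicate] using congrArg Tm.var (by
        simpa [transAux, List.replicate, Db.var.injEq] using h)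
    | up0 _ => simp [transAux, List.replicate] at h
    | app _ _ => simp [transAux, List.replicate] at h
    | lam _ => simp [transAux, List.replicate] at h
  | varz n =>
    intro hN h
    cases hN with
    | varz _ => rfl
    | app _ _ => simp [transAux, List.replicate] at h
    | lam _ => simp [transAux, List.replicate] at h
    | upS _ => simp [transAux, List.replicate] at h
  | app _ _ ih1 ih2 =>
    intro hN h
    cases hN with
    | app h1 h2 =>
      simp only [transAux, Db.app.injEq] at h
      rw [ih1 h1 h.1, ih2 h2 h.2]
    | var0 _ => simp [transAux, List.replicate] at h
    | varz _ => simp [transAux, List.replicate] at h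
    | lam _ => simp [transAux, List.replicate] at h
    | up0 _ => simp [transAux, List.replicate] at h
    | upS _ => simp [transAux, List.replicate] at h
  | lam _ ih =>
    intro hN h
    cases hN with
    | lam h1 =>
      simp only [transAux, Db.lam.injEq] at h
      rw [ih h1 (by simpa [List.replicate] using h)]
    | var0 _ => simp [transAux, List.replicate] at h
    | varz _ => simp [transAux, List.replicate] at h
    | app _ _ => simp [transAux, List.replicate] at h
    | up0 _ => simp [transAux, List.replicate] at h
    | upS _ => simp [transAux, List.replicate] at h
  | up0 _ ih =>
    intro hN h
    cases hN with
    | up0 h1 =>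
      simp only [transAux, List.replicate, Db.up.injEq] at h
      rw [ih h1 h]
    | var0 _ => simp [transAux, List.replicate] at h
    | app _ _ => simp [transAux, List.replicate] at h
    | lam _ => simp [transAux, List.replicate] at h
  | upS _ ih =>
    intro hN h
    cases hN with
    | upS h1 =>
      simp only [transAux, List.replicate, Db.up.injEq] at h
      rw [ih h1 h]
    | varz _ => simp [transAux, List.replicate] at h
    | app _ _ => simp [transAux, List.replicate] at h
    | lam _ => simp [transAux, List.replicate] at h

theorem alpha_db (z : ℕ) : ∀ M : Tm, Alpha M (db z M) := by
  intro M
  induction M with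
  | var x => exact Alpha.refl _
  | app M N ihM ihN => exact Alpha.app ihM ihN
  | lam x M ih =>
    exact Alpha.trans (Alpha.lam x ih) (Alpha.rename x z (db z M))
  | up M ih => exact Alpha.up ih

/-- if `‖nil ⊢ M‖ = ‖nil ⊢ N‖` then `M =α N`. -/
theorem stmt17 (M N : Tm) (h : transl [] M = transl [] N) : Alpha M N := by
  have h' : transAux [] (db 0 M) = transAux [] (db 0 N) := by
    rw [transAux_db, transAux_db]
    exact h
  have heq : db 0 M = db 0 N :=
    transAux_inj 0 (n := 0) (good_db 0 M) (good_db 0 N) h'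
  exact Alpha.trans (alpha_db 0 M) (heq ▸ Alpha.symm (alpha_db 0 N))
end

section
/- For all variables x₁, x₂, z and every term M in Λ↑, one has λx₁ λx₂ M =α λz λz ({z/x₁,x₂} M), where {z/x₁,x₂} M = {zx₂}({zx₁}_{x₂} M). -/
/-- `λx₁ λx₂ M =α λz λz ({z/x₁,x₂} M)`,
where `{z/x₁,x₂} M = {zx₂}({zx₁}_{x₂} M)`. -/
theorem stmt18 (x₁ x₂ z : ℕ) (M : Tm) :
    Alpha (Tm.lam x₁ (Tm.lam x₂ M))
      (Tm.lam z (Tm.lam z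
        ((Ren.swap z x₂).apply (((Ren.swap z x₁).lift x₂).apply M)))) := by
  have h1 := Alpha.rename x₁ z (Tm.lam x₂ M)
  have e : (Ren.swap z x₁).apply (Tm.lam x₂ M)
      = Tm.lam x₂ (((Ren.swap z x₁).lift x₂).apply M) := by
    rw [Ren.apply]
  rw [e] at h1
  exact h1.trans (Alpha.lam z (Alpha.rename x₂ z _))
end
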